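/- Let T be a semigroup with the F-property and let T⁰ = T ∪ {0} be T with an adjoined zero. Let τ_Ac be the topology on T⁰ in which every element of T is an isolated point and the neighbourhoods of 0 are exactly the sets U ⊆ T⁰ with 0 ∈ U and T⁰ \ U finite. Then (T⁰, τ_Ac) is a Hausdorff compact semitopological semigroup. -/

import Mathlib

/-!
The topology `τ_Ac` is the one-point compactification of the discrete space `T`: every point
of `T` is isolated and the neighbourhoods of `0` are the cofinite sets containing it. It is
compact because `T`, indexed by itself, converges to `0` along the cofinite filter, and
Hausdorff because `{t}ᶜ` is a neighbourhood of `0`. A map fixing `0` is continuous as soon as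
every point of `T` has a finite preimage; for the translations by `a ∈ T` these preimages are
the solution sets of `a·x = b` and `x·a = b`, finite by the F-property.
-/

/-- A semigroup `T` with an adjoined zero: `T⁰ = T ∪ {0}`, where `none` plays the
role of the zero and `0·x = x·0 = 0·0 = 0`. -/
def adjZeroMul {T : Type*} [Mul T] : Option T → Option T → Option T
  | some a, some b => some (a * b)
  | _, _ => none

open Filter Topology Set

section CofiniteNhdsNone

variable {T : Type*} [TopologicalSpace (Option T)]

theorem t2Space_of_cofinite_nhds_none (hiso : ∀ t : T, IsOpen {some t})
    (hnhds : ∀ U : Set (Option T), U ∈ 𝓝 none ↔ none ∈ U ∧ Uᶜ.Finite) :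
    T2Space (Option T) := by
  have hpure (t : T) : 𝓝 (some t) = pure (some t) :=
    (isOpen_singleton_iff_nhds_eq_pure _).mp (hiso t)
  have hsep (t : T) : Disjoint (𝓝 none) (𝓝 (some t)) := by
    rw [hpure, ← principal_singleton, disjoint_principal_right, hnhds]
    simp
  rw [t2Space_iff_disjoint_nhds]
  rintro (_ | a) (_ | b) hne
  · exact absurd rfl hne
  · exact hsep b
  · exact (hsep a).symm
  · rwa [hpure, hpure, disjoint_pure_pure]

theorem compactSpace_of_cofinite_nhds_none
    (hnhds : ∀ U : Set (Option T), U ∈ 𝓝 none ↔ none ∈ U ∧ Uᶜ.Finite) :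
    CompactSpace (Option T) := by
  have hsome : Tendsto some cofinite (𝓝 (none : Option T)) := fun U hU => by
    rw [mem_map, mem_cofinite, ← preimage_compl]
    exact ((hnhds U).mp hU).2.preimage (Option.some_injective T).injOn
  exact ⟨by simpa only [insert_none_range_some] using hsome.isCompact_insert_range_of_cofinite⟩

theorem continuous_of_finite_preimage_some (hiso : ∀ t : T, IsOpen {some t})
    (hnhds : ∀ U : Set (Option T), U ∈ 𝓝 none ↔ none ∈ U ∧ Uᶜ.Finite)
    {f : Option T → Option T} (hf : f none = none)
    (hfin : ∀ b : T, (f ⁻¹' {some b}).Finite) : Continuous f := by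
  rw [continuous_iff_continuousAt]
  rintro (_ | t)
  · intro U hU
    rw [hf, hnhds] at hU
    rw [mem_map, hnhds, ← preimage_compl]
    refine ⟨by simpa [hf] using hU.1, hU.2.preimage' ?_⟩
    rintro (_ | b) hb
    · exact absurd hU.1 hb
    · exact hfin b
  · rw [ContinuousAt, (isOpen_singleton_iff_nhds_eq_pure _).mp (hiso t)]
    exact tendsto_pure_nhds f _

end CofiniteNhdsNone

section AdjZeroMul

variable {T : Type*} [Mul T]

@[simp]
theorem adjZeroMul_none_left (x : Option T) : adjZeroMul none x = none := by
  cases x <;> rfl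

@[simp]
theorem adjZeroMul_none_right (x : Option T) : adjZeroMul x none = none := by
  cases x <;> rfl

theorem preimage_adjZeroMul_some_left (a b : T) :
    adjZeroMul (some a) ⁻¹' {some b} = some '' {x | a * x = b} := by
  ext (_ | x) <;> simp [adjZeroMul]

theorem preimage_adjZeroMul_some_right (a b : T) :
    (adjZeroMul · (some a)) ⁻¹' {some b} = some '' {x | x * a = b} := by
  ext (_ | x) <;> simp [adjZeroMul]

theorem continuous_adjZeroMul_left [TopologicalSpace (Option T)]
    (hiso : ∀ t : T, IsOpen {some t})
    (hnhds : ∀ U : Set (Option T), U ∈ 𝓝 none ↔ none ∈ U ∧ Uᶜ.Finite)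
    (hfin : ∀ a b : T, {x | a * x = b}.Finite)
    (a : Option T) : Continuous (adjZeroMul a) := by
  cases a with
  | none => exact continuous_const.congr fun x => (adjZeroMul_none_left x).symm
  | some a =>
    refine continuous_of_finite_preimage_some hiso hnhds rfl fun b => ?_
    rw [preimage_adjZeroMul_some_left]
    exact (hfin a b).image some

theorem continuous_adjZeroMul_right [TopologicalSpace (Option T)]
    (hiso : ∀ t : T, IsOpen {some t})
    (hnhds : ∀ U : Set (Option T), U ∈ 𝓝 none ↔ none ∈ U ∧ Uᶜ.Finite)
    (hfin : ∀ a b : T, {x | x * a = b}.Finite)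
    (a : Option T) : Continuous (adjZeroMul · a) := by
  cases a with
  | none => exact continuous_const.congr fun x => (adjZeroMul_none_right x).symm
  | some a =>
    refine continuous_of_finite_preimage_some hiso hnhds rfl fun b => ?_
    rw [preimage_adjZeroMul_some_right]
    exact (hfin a b).image some

end AdjZeroMul

/-- Lemma 3.7: if `T` is a semigroup with the F-property (for all `a, b ∈ T` the
sets `{x : a·x = b}` and `{x : x·a = b}` are finite) and `τ_Ac` is the topology on
`T⁰ = T ∪ {0}` in which every element of `T` is isolated and the neighbourhoods of
`0` are exactly the sets `U ∋ 0` with finite complement, then `(T⁰, τ_Ac)` is a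
Hausdorff compact semitopological semigroup. -/
theorem statement10 {T : Type*} [Semigroup T]
    (hFprop : ∀ a b : T, {x : T | a * x = b}.Finite ∧ {x : T | x * a = b}.Finite)
    (τ : TopologicalSpace (Option T))
    (hiso : ∀ t : T, @IsOpen _ τ {some t})
    (hnhds : ∀ U : Set (Option T),
      U ∈ @nhds _ τ none ↔ (none ∈ U ∧ Uᶜ.Finite)) :
    @T2Space _ τ ∧ @CompactSpace _ τ ∧
      ∀ a : Option T, @Continuous _ _ τ τ (fun x => adjZeroMul a x) ∧
        @Continuous _ _ τ τ (fun x => adjZeroMul x a) := by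
  let _ := τ
  exact ⟨t2Space_of_cofinite_nhds_none hiso hnhds, compactSpace_of_cofinite_nhds_none hnhds,
    fun a => ⟨continuous_adjZeroMul_left hiso hnhds (fun a b => (hFprop a b).1) a,
      continuous_adjZeroMul_right hiso hnhds (fun a b => (hFprop a b).2) a⟩⟩
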